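/- Every body of constant width in ℍ^d is strictly convex; that is, if W ⊂ ℍ^d is a convex body such that width_H(W) = δ for every supporting hyperplane H, then every supporting hyperplane of W meets W in exactly one point. -/

import Mathlib

noncomputable section

namespace HypSpace

/-- Inverse hyperbolic cosine. -/
def arcosh (x : ℝ) : ℝ := Real.log (x + Real.sqrt (x ^ 2 - 1))

/-- The Minkowski bilinear form on `ℝ^{d+1}` (signature `(d,1)`, the last
coordinate being timelike). -/
def mink (d : ℕ) (x y : EuclideanSpace ℝ (Fin (d + 1))) : ℝ :=
  (∑ i : Fin d, x i.castSucc * y i.castSucc) - x (Fin.last d) * y (Fin.last d)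

/-- The hyperboloid model of `d`-dimensional hyperbolic space: the upper sheet
of the two-sheeted hyperboloid `mink x x = -1`. -/
def Pt (d : ℕ) : Type := {x : EuclideanSpace ℝ (Fin (d + 1)) // mink d x x = -1 ∧ 0 < x (Fin.last d)}

variable {d : ℕ}

/-- Hyperbolic distance between two points of `ℍ^d`. -/
def hdist (p q : Pt d) : ℝ := arcosh (-(mink d p.1 q.1))

/-- The geodesic segment between `a` and `b`, described metrically via betweenness
(hyperbolic space is uniquely geodesic). -/
def seg (a b : Pt d) : Set (Pt d) := {p | hdist a p + hdist p b = hdist a b}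

/-- A set is (geodesically) convex if it contains the segment between any two of its points. -/
def IsConvexSet (C : Set (Pt d)) : Prop := ∀ a ∈ C, ∀ b ∈ C, seg a b ⊆ C

/-- The convex hull: the smallest convex set containing `A`. -/
def chull (A : Set (Pt d)) : Set (Pt d) := ⋂₀ {C | IsConvexSet C ∧ A ⊆ C}

/-- The totally geodesic hyperplane with (spacelike) normal vector `v`. -/
def plane (v : EuclideanSpace ℝ (Fin (d + 1))) : Set (Pt d) := {p | mink d v p.1 = 0}

/-- A hyperplane of `ℍ^d`: the trace on the hyperboloid of a linear hyperplane
with spacelike unit normal. -/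
def IsHyperplane (H : Set (Pt d)) : Prop := ∃ v, mink d v v = 1 ∧ H = plane v

/-- Distance from a point to a set. -/
def distPS (p : Pt d) (S : Set (Pt d)) : ℝ := sInf (hdist p '' S)

/-- Distance between two sets. -/
def distSS (A B : Set (Pt d)) : ℝ := sInf {r | ∃ a ∈ A, ∃ b ∈ B, hdist a b = r}

/-- `h` is the orthogonal projection of `g` onto `H`: the point of `H`
realizing the distance from `g` to `H`.  For a hyperplane `H` with `a ∈ H`,
`IsProj b H a` also expresses that `H` is orthogonal to the segment `ab` at `a`. -/
def IsProj (g : Pt d) (H : Set (Pt d)) (h : Pt d) : Prop :=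
  h ∈ H ∧ ∀ k ∈ H, hdist g h ≤ hdist g k

/-- Two hyperplanes are ultraparallel if they are disjoint and not asymptotically
parallel (their distance is positive, i.e. they admit a common perpendicular). -/
def Ultraparallel (H J : Set (Pt d)) : Prop :=
  IsHyperplane H ∧ IsHyperplane J ∧ H ∩ J = ∅ ∧ 0 < distSS H J

/-- `p` is an interior point of `C`. -/
def IsIntr (C : Set (Pt d)) (p : Pt d) : Prop := ∃ ε > 0, ∀ q, hdist p q < ε → q ∈ C

/-- `p` is a boundary point of the (closed) set `C`. -/
def IsBdry (C : Set (Pt d)) (p : Pt d) : Prop := p ∈ C ∧ ¬ IsIntr C p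

/-- `C` is bounded. -/
def IsBddSet (C : Set (Pt d)) : Prop := ∃ R, ∀ a ∈ C, ∀ b ∈ C, hdist a b ≤ R

/-- `C` is closed. -/
def IsClosedSet (C : Set (Pt d)) : Prop :=
  ∀ p : Pt d, (∀ ε > 0, ∃ q ∈ C, hdist p q < ε) → p ∈ C

/-- A convex body: a compact (closed and bounded) convex set with nonempty interior. -/
def IsBody (C : Set (Pt d)) : Prop :=
  IsConvexSet C ∧ IsBddSet C ∧ IsClosedSet C ∧ ∃ p, IsIntr C p

/-- The hyperplane `H` supports `C`: it meets `C` but misses its interior. -/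
def Supports (H C : Set (Pt d)) : Prop :=
  IsHyperplane H ∧ (H ∩ C).Nonempty ∧ ∀ p, IsIntr C p → p ∉ H

/-- The width of `C` determined by `H`, as the maximum distance from `H`
to a point of `C`. -/
def width (H C : Set (Pt d)) : ℝ := sSup ((fun c => distPS c H) '' C)

/-- The width of `C` determined by `H`, as the distance from `H` to a farthest
supporting hyperplane of `C` ultraparallel to `H`. -/
def widthUP (H C : Set (Pt d)) : ℝ :=
  sSup {r | ∃ J, Supports J C ∧ Ultraparallel H J ∧ distSS H J = r}

/-- The thickness of `C`: the minimum width over supporting hyperplanes. -/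
def thickness (C : Set (Pt d)) : ℝ := sInf {r | ∃ H, Supports H C ∧ width H C = r}

/-- The diameter of `C`. -/
def diam (C : Set (Pt d)) : ℝ := sSup {r | ∃ a ∈ C, ∃ b ∈ C, hdist a b = r}

/-- A body of constant width `δ`. -/
def ConstWidth (W : Set (Pt d)) (δ : ℝ) : Prop :=
  IsBody W ∧ ∀ H, Supports H W → width H W = δ

/-- A complete set of diameter `δ`. -/
def CompleteSet (C : Set (Pt d)) (δ : ℝ) : Prop :=
  diam C = δ ∧ ∀ x, x ∉ C → diam (C ∪ {x}) > δ

/-- A body of constant diameter `δ`. -/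
def ConstDiam (C : Set (Pt d)) (δ : ℝ) : Prop :=
  diam C = δ ∧ ∀ p, IsBdry C p → ∃ p' ∈ C, hdist p p' = δ

/-!
Let `x` be a point of `W` farthest from the supporting hyperplane `H`; its distance to `H` is the
width `δ`. The diameter of `W` is at most `δ`: for `a ∈ W` and a point `b ∈ W` farthest from `a`,
the hyperplane through `b` orthogonal to `ab` supports `W`, so `d(a, b)` is at most its width.
Hence every point of `H ∩ W` is at distance exactly `δ` from `x`. If there were two of them, their
midpoint would lie on `H` and, hyperbolic balls being strictly convex, strictly closer than `δ`
to `x`, which is absurd.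
-/

open Real
open scoped InnerProductSpace

section Minkowski

variable (x y z : EuclideanSpace ℝ (Fin (d + 1))) (c : ℝ)

lemma mink_eq_inner :
    mink d x y = ⟪x, y⟫_ℝ - 2 * (x (Fin.last d) * y (Fin.last d)) := by
  simp only [mink, PiLp.inner_apply, RCLike.inner_apply, conj_trivial, Fin.sum_univ_castSucc,
    mul_comm (y _)]
  ring

lemma mink_comm : mink d x y = mink d y x := by
  simp only [mink_eq_inner, real_inner_comm]; ring

lemma mink_add_left : mink d (x + y) z = mink d x z + mink d y z := by
  simp only [mink_eq_inner, inner_add_left, PiLp.add_apply]; ring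

lemma mink_add_right : mink d x (y + z) = mink d x y + mink d x z := by
  simp only [mink_eq_inner, inner_add_right, PiLp.add_apply]; ring

lemma mink_sub_left : mink d (x - y) z = mink d x z - mink d y z := by
  simp only [mink_eq_inner, inner_sub_left, PiLp.sub_apply]; ring

lemma mink_sub_right : mink d x (y - z) = mink d x y - mink d x z := by
  simp only [mink_eq_inner, inner_sub_right, PiLp.sub_apply]; ring

lemma mink_smul_left : mink d (c • x) y = c * mink d x y := by
  simp only [mink_eq_inner, real_inner_smul_left, PiLp.smul_apply, smul_eq_mul]; ring

lemma mink_smul_right : mink d x (c • y) = c * mink d x y := by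
  simp only [mink_eq_inner, real_inner_smul_right, PiLp.smul_apply, smul_eq_mul]; ring

lemma mink_neg_left : mink d (-x) y = -mink d x y := by
  simp only [mink_eq_inner, inner_neg_left, PiLp.neg_apply]; ring

lemma mink_neg_right : mink d x (-y) = -mink d x y := by
  simp only [mink_eq_inner, inner_neg_right, PiLp.neg_apply]; ring

@[fun_prop]
lemma Continuous.mink {α : Type*} [TopologicalSpace α]
    {f g : α → EuclideanSpace ℝ (Fin (d + 1))} (hf : Continuous f) (hg : Continuous g) : Continuous fun a => mink d (f a) (g a) := by
  simp only [mink_eq_inner]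
  fun_prop

end Minkowski

lemma Pt.one_le_last (p : Pt d) : 1 ≤ p.1 (Fin.last d) := by
  have h := p.2.1
  have hs : 0 ≤ ∑ i : Fin d, p.1 i.castSucc * p.1 i.castSucc :=
    Finset.sum_nonneg fun i _ => mul_self_nonneg _
  unfold mink at h
  nlinarith [p.2.2]

lemma Pt.norm_sq (p : Pt d) : ‖p.1‖ ^ 2 = 2 * p.1 (Fin.last d) ^ 2 - 1 := by
  have h := p.2.1
  rw [mink_eq_inner, real_inner_self_eq_norm_sq] at h
  linarith

lemma sq_spatial_inner_le (p q : Pt d) :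
    (∑ i : Fin d, p.1 i.castSucc * q.1 i.castSucc) ^ 2 ≤
      (p.1 (Fin.last d) ^ 2 - 1) * (q.1 (Fin.last d) ^ 2 - 1) := by
  have hsq : ∀ r : Pt d, ∑ i : Fin d, r.1 i.castSucc ^ 2 = r.1 (Fin.last d) ^ 2 - 1 := by
    intro r
    have h := r.2.1
    simp only [mink, ← sq] at h
    linarith
  rw [← hsq p, ← hsq q]
  exact Finset.sum_mul_sq_le_sq_mul_sq _ _ _

lemma one_le_neg_mink (p q : Pt d) : 1 ≤ -mink d p.1 q.1 := by
  have hcs := sq_spatial_inner_le p q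
  have hp := p.one_le_last
  have hq := q.one_le_last
  set a := p.1 (Fin.last d)
  set b := q.1 (Fin.last d)
  set A := ∑ i : Fin d, p.1 i.castSucc * q.1 i.castSucc
  have hsq : A ^ 2 ≤ (a * b - 1) ^ 2 := hcs.trans (by nlinarith [sq_nonneg (a - b)])
  have hA := abs_le_of_sq_le_sq' hsq (by nlinarith)
  have hm : mink d p.1 q.1 = A - a * b := rfl
  rw [hm]
  linarith [hA.2]

lemma eq_of_neg_mink_eq_one {p q : Pt d} (h : -mink d p.1 q.1 = 1) : p = q := by
  have hcs := sq_spatial_inner_le p q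
  have hm : mink d p.1 q.1 =
      ∑ i : Fin d, p.1 i.castSucc * q.1 i.castSucc - p.1 (Fin.last d) * q.1 (Fin.last d) := rfl
  have hlast : p.1 (Fin.last d) = q.1 (Fin.last d) := by
    nlinarith [sq_nonneg (p.1 (Fin.last d) - q.1 (Fin.last d))]
  have hpq : ⟪p.1, q.1⟫_ℝ = 2 * p.1 (Fin.last d) * q.1 (Fin.last d) - 1 := by
    rw [mink_eq_inner] at h; linarith
  have hnorm : ‖p.1 - q.1‖ ^ 2 = 0 := by
    rw [norm_sub_sq_real, p.norm_sq, q.norm_sq, hpq, hlast]; ring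
  exact Subtype.ext (sub_eq_zero.1 (norm_eq_zero.1 (pow_eq_zero_iff two_ne_zero |>.1 hnorm)))

lemma one_lt_neg_mink_of_ne {p q : Pt d} (h : p ≠ q) : 1 < -mink d p.1 q.1 :=
  (one_le_neg_mink p q).lt_of_ne fun h' => h (eq_of_neg_mink_eq_one h'.symm)

lemma last_le_two_mul_neg_mink (p q : Pt d) :
    q.1 (Fin.last d) ≤ 2 * p.1 (Fin.last d) * -mink d p.1 q.1 := by
  have hcs := sq_spatial_inner_le p q
  have hp := p.one_le_last
  have hq := q.one_le_last
  set a := p.1 (Fin.last d)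
  set b := q.1 (Fin.last d)
  set A := ∑ i : Fin d, p.1 i.castSucc * q.1 i.castSucc
  have hsq : (2 * a * A) ^ 2 ≤ ((2 * a ^ 2 - 1) * b) ^ 2 := by
    calc (2 * a * A) ^ 2 = 4 * a ^ 2 * A ^ 2 := by ring
      _ ≤ 4 * a ^ 2 * ((a ^ 2 - 1) * (b ^ 2 - 1)) := by gcongr
      _ ≤ ((2 * a ^ 2 - 1) * b) ^ 2 := by
        nlinarith [mul_nonneg (sq_nonneg a) (show 0 ≤ a ^ 2 - 1 by nlinarith)]
  have hA := abs_le_of_sq_le_sq' hsq (by nlinarith)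
  have hm : mink d p.1 q.1 = A - a * b := rfl
  rw [hm]
  nlinarith [hA.2]

def Pt.ofTimelike (w : EuclideanSpace ℝ (Fin (d + 1))) (hw : mink d w w < 0)
    (ht : 0 < w (Fin.last d)) : Pt d :=
  ⟨(√(-mink d w w))⁻¹ • w, by
    rw [mink_smul_left, mink_smul_right, ← mul_assoc, ← mul_inv, ← sq,
      sq_sqrt (neg_nonneg.2 hw.le)]
    field_simp [hw.ne],
   by simpa using mul_pos (inv_pos.2 (sqrt_pos.2 (neg_pos.2 hw))) ht⟩

lemma Pt.mink_ofTimelike (x w : EuclideanSpace ℝ (Fin (d + 1))) (hw : mink d w w < 0)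
    (ht : 0 < w (Fin.last d)) :
    mink d x (Pt.ofTimelike w hw ht).1 = mink d x w / √(-mink d w w) := by
  rw [Pt.ofTimelike, mink_smul_right, inv_mul_eq_div]

lemma last_pos_of_timelike (c : Pt d) {w : EuclideanSpace ℝ (Fin (d + 1))}
    (hw : mink d w w < 0) (hcw : mink d c.1 w < 0) : 0 < w (Fin.last d) := by
  by_contra! hle
  -- if `w` pointed to the past, `-w` would normalize to a point violating `one_le_neg_mink`
  rcases hle.lt_or_eq with hneg | hzero
  · have hw' : mink d (-w) (-w) < 0 := by rwa [mink_neg_left, mink_neg_right, neg_neg]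
    have h := one_le_neg_mink c (Pt.ofTimelike (-w) hw' (by simpa using hneg))
    rw [Pt.mink_ofTimelike, mink_neg_right, neg_div, neg_neg] at h
    linarith [div_neg_of_neg_of_pos hcw (sqrt_pos.2 (neg_pos.2 hw'))]
  · rw [mink_eq_inner, hzero, real_inner_self_eq_norm_sq] at hw
    nlinarith [sq_nonneg ‖w‖]

lemma hdist_eq (p q : Pt d) : hdist p q = Real.arcosh (-mink d p.1 q.1) := rfl

lemma hdist_nonneg (p q : Pt d) : 0 ≤ hdist p q := arcosh_nonneg (one_le_neg_mink p q)

lemma hdist_self (p : Pt d) : hdist p p = 0 := by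
  rw [hdist_eq, p.2.1, neg_neg, arcosh_zero]

lemma hdist_le_hdist_iff {p q p' q' : Pt d} :
    hdist p q ≤ hdist p' q' ↔ -mink d p.1 q.1 ≤ -mink d p'.1 q'.1 :=
  arcosh_le_arcosh (by linarith [one_le_neg_mink p q]) (by linarith [one_le_neg_mink p' q'])

lemma hdist_lt_hdist_iff {p q p' q' : Pt d} :
    hdist p q < hdist p' q' ↔ -mink d p.1 q.1 < -mink d p'.1 q'.1 :=
  arcosh_lt_arcosh (by linarith [one_le_neg_mink p q]) (by linarith [one_le_neg_mink p' q'])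

lemma hdist_le_iff {p q : Pt d} {r : ℝ} (hr : 0 ≤ r) :
    hdist p q ≤ r ↔ -mink d p.1 q.1 ≤ cosh r := by
  rw [hdist_eq, ← arcosh_le_arcosh (by linarith [one_le_neg_mink p q]) (cosh_pos r),
    arcosh_cosh hr]

lemma hdist_lt_iff {p q : Pt d} {r : ℝ} (hr : 0 ≤ r) :
    hdist p q < r ↔ -mink d p.1 q.1 < cosh r := by
  rw [hdist_eq, ← arcosh_lt_arcosh (by linarith [one_le_neg_mink p q]) (cosh_pos r),
    arcosh_cosh hr]

lemma mem_plane {v : EuclideanSpace ℝ (Fin (d + 1))} {p : Pt d} :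
    p ∈ plane v ↔ mink d v p.1 = 0 := Iff.rfl

lemma distPS_nonneg (x : Pt d) (S : Set (Pt d)) : 0 ≤ distPS x S :=
  Real.sInf_nonneg (by rintro _ ⟨k, -, rfl⟩; exact hdist_nonneg x k)

lemma distPS_le_hdist {x p : Pt d} {S : Set (Pt d)} (hp : p ∈ S) : distPS x S ≤ hdist x p :=
  csInf_le ⟨0, by rintro _ ⟨k, -, rfl⟩; exact hdist_nonneg x k⟩ ⟨p, hp, rfl⟩

/-- The foot of the perpendicular from `x` to `plane v` is `x - ⟨v, x⟩ v`, normalized. -/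
lemma isLeast_hdist_plane {v : EuclideanSpace ℝ (Fin (d + 1))} (hv : mink d v v = 1) (x : Pt d) :
    IsLeast (hdist x '' plane v) (Real.arcosh √(1 + mink d v x.1 ^ 2)) := by
  set α := mink d v x.1
  set w := x.1 - α • v
  have hww : mink d w w = -(1 + α ^ 2) := by
    simp only [w, mink_sub_left, mink_sub_right, mink_smul_left, mink_smul_right, x.2.1, hv,
      mink_comm x.1 v]
    ring
  have hxw : mink d x.1 w = -(1 + α ^ 2) := by
    simp only [w, mink_sub_right, mink_smul_right, x.2.1, mink_comm x.1 v]
    ring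
  have hβ : 0 < √(1 + α ^ 2) := sqrt_pos.2 (by positivity)
  have hw : mink d w w < 0 := by rw [hww]; exact neg_neg_of_pos (by positivity)
  have hwt := last_pos_of_timelike x hw (by rw [hxw]; exact neg_neg_of_pos (by positivity))
  refine ⟨⟨Pt.ofTimelike w hw hwt, ?_, ?_⟩, ?_⟩
  · rw [mem_plane, Pt.mink_ofTimelike]
    simp only [w, mink_sub_right, mink_smul_right, hv]
    simp [α]
  · rw [hdist_eq, Pt.mink_ofTimelike, hxw, hww, neg_neg, neg_div, neg_neg, div_sqrt]
  · rintro _ ⟨k, hk, rfl⟩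
    have hfoot := one_le_neg_mink k (Pt.ofTimelike w hw hwt)
    rw [Pt.mink_ofTimelike, hww, neg_neg, ← neg_div, le_div_iff₀ hβ, one_mul] at hfoot
    have hxk : mink d x.1 k.1 = mink d k.1 w := by
      rw [mink_comm, mink_sub_right, mink_smul_right, mink_comm k.1 v, mem_plane.1 hk, mul_zero,
        sub_zero]
    rw [hdist_eq, hxk]
    exact (arcosh_le_arcosh hβ (by linarith)).2 hfoot

lemma distPS_plane {v : EuclideanSpace ℝ (Fin (d + 1))} (hv : mink d v v = 1) (x : Pt d) :
    distPS x (plane v) = Real.arcosh √(1 + mink d v x.1 ^ 2) :=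
  (isLeast_hdist_plane hv x).csInf_eq

lemma exists_hdist_lt_mink_neg {u : EuclideanSpace ℝ (Fin (d + 1))} (hu : mink d u u = 1)
    {c : Pt d} (hc : c ∈ plane u) {ε : ℝ} (hε : 0 < ε) :
    ∃ c' : Pt d, hdist c c' < ε ∧ mink d u c'.1 < 0 := by
  -- the point at distance `ε / 2` from `c` on the geodesic through `c` normal to `plane u`
  set w := cosh (ε / 2) • c.1 - sinh (ε / 2) • u
  have hcu := mem_plane.1 hc
  have hww : mink d w w = -1 := by
    simp only [w, mink_sub_left, mink_sub_right, mink_smul_left, mink_smul_right, c.2.1, hu, hcu,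
      mink_comm c.1 u]
    nlinarith [cosh_sq (ε / 2)]
  have hcw : mink d c.1 w = -cosh (ε / 2) := by
    simp only [w, mink_sub_right, mink_smul_right, c.2.1, mink_comm c.1 u, hcu]
    ring
  have hwt := last_pos_of_timelike c (by rw [hww]; norm_num)
    (by rw [hcw]; linarith [cosh_pos (ε / 2)])
  refine ⟨⟨w, hww, hwt⟩, ?_, ?_⟩
  · change Real.arcosh (-mink d c.1 w) < ε
    rw [hcw, neg_neg, arcosh_cosh (by positivity)]
    linarith
  · change mink d u w < 0
    simp only [w, mink_sub_right, mink_smul_right, hu, hcu]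
    linarith [sinh_pos_iff.2 (half_pos hε)]

lemma supports_plane_of_forall_nonneg {u : EuclideanSpace ℝ (Fin (d + 1))} (hu : mink d u u = 1)
    {W : Set (Pt d)} (hne : (plane u ∩ W).Nonempty) (hW : ∀ e ∈ W, 0 ≤ mink d u e.1) :
    Supports (plane u) W := by
  refine ⟨⟨u, hu, rfl⟩, hne, fun p hint hp => ?_⟩
  obtain ⟨ε, hε, hball⟩ := hint
  obtain ⟨p', hpp', hneg⟩ := exists_hdist_lt_mink_neg hu hp hε
  exact (hW p' (hball p' hpp')).not_gt hneg

lemma mink_add_add_lt_zero (p q : Pt d) : mink d (p.1 + q.1) (p.1 + q.1) < 0 := by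
  have := one_le_neg_mink p q
  rw [mink_add_left, mink_add_right, mink_add_right, p.2.1, q.2.1, mink_comm q.1]
  linarith

lemma last_add_pos (p q : Pt d) : 0 < (p.1 + q.1) (Fin.last d) := add_pos p.2.2 q.2.2

/-- The midpoint of the geodesic segment from `p` to `q`. -/
def Pt.midpoint (p q : Pt d) : Pt d :=
  Pt.ofTimelike (p.1 + q.1) (mink_add_add_lt_zero p q) (last_add_pos p q)

lemma Pt.midpoint_mem_plane {v : EuclideanSpace ℝ (Fin (d + 1))} {p q : Pt d}
    (hp : p ∈ plane v) (hq : q ∈ plane v) : Pt.midpoint p q ∈ plane v := by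
  rw [mem_plane] at *
  rw [Pt.midpoint, Pt.mink_ofTimelike, mink_add_right, hp, hq, add_zero, zero_div]

/-- Hyperbolic balls are strictly convex. -/
lemma hdist_midpoint_lt {x p q : Pt d} (hne : p ≠ q) (h : hdist x p = hdist x q) :
    hdist x (Pt.midpoint p q) < hdist x p := by
  have hT : -mink d x.1 q.1 = -mink d x.1 p.1 :=
    le_antisymm (hdist_le_hdist_iff.1 h.ge) (hdist_le_hdist_iff.1 h.le)
  have hT1 := one_le_neg_mink x p
  have hC := one_lt_neg_mink_of_ne hne
  set N := √(-mink d (p.1 + q.1) (p.1 + q.1))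
  have hN : 2 < N := by
    rw [show (2 : ℝ) = √(2 ^ 2) by simp]
    refine sqrt_lt_sqrt (by norm_num) ?_
    rw [mink_add_left, mink_add_right, mink_add_right, p.2.1, q.2.1, mink_comm q.1]
    linarith
  rw [hdist_lt_hdist_iff, Pt.midpoint, Pt.mink_ofTimelike, mink_add_right, ← neg_div,
    div_lt_iff₀ (by linarith)]
  nlinarith

section Compactness

variable {W : Set (Pt d)}

lemma Pt.norm_le_two_mul_last (p : Pt d) : ‖p.1‖ ≤ 2 * p.1 (Fin.last d) := by
  nlinarith [norm_nonneg p.1, p.norm_sq, p.one_le_last]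

lemma IsBddSet.isBounded_image_val (hbd : IsBddSet W) :
    Bornology.IsBounded (Subtype.val '' W) := by
  rcases W.eq_empty_or_nonempty with rfl | ⟨a, ha⟩
  · exact Bornology.isBounded_empty.subset (by rintro _ ⟨b, hb, -⟩; exact hb.elim)
  obtain ⟨R, hR⟩ := hbd
  have hR0 : 0 ≤ R := (hdist_nonneg a a).trans (hR a ha a ha)
  refine isBounded_iff_forall_norm_le.2 ⟨2 * (2 * a.1 (Fin.last d) * cosh R), ?_⟩
  rintro _ ⟨b, hb, rfl⟩
  have hfar := (hdist_le_iff hR0).1 (hR a ha b hb)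
  have ha0 : 0 ≤ 2 * a.1 (Fin.last d) := by linarith [a.one_le_last]
  calc ‖b.1‖ ≤ 2 * b.1 (Fin.last d) := Pt.norm_le_two_mul_last b
    _ ≤ 2 * (2 * a.1 (Fin.last d) * -mink d a.1 b.1) := by
      gcongr; exact last_le_two_mul_neg_mink a b
    _ ≤ 2 * (2 * a.1 (Fin.last d) * cosh R) := by gcongr

lemma IsClosedSet.isClosed_image_val (hcl : IsClosedSet W) : IsClosed (Subtype.val '' W) := by
  refine isClosed_of_closure_subset fun z hz => ?_
  have hzz : z ∈ {y | mink d y y = -1} :=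
    closure_minimal (by rintro _ ⟨b, -, rfl⟩; exact b.2.1)
      (isClosed_eq (by fun_prop) continuous_const) hz
  have hzt : z ∈ {y : EuclideanSpace ℝ (Fin (d + 1)) | 1 ≤ y (Fin.last d)} :=
    closure_minimal (by rintro _ ⟨b, -, rfl⟩; exact Pt.one_le_last b)
      (isClosed_le continuous_const (by fun_prop)) hz
  refine ⟨⟨z, hzz, zero_lt_one.trans_le hzt⟩, hcl _ fun ε hε => ?_, rfl⟩
  have hU : IsOpen {y | -mink d z y < cosh ε} := isOpen_lt (by fun_prop) continuous_const
  obtain ⟨_, hy, q, hq, rfl⟩ :=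
    mem_closure_iff.1 hz _ hU (by simpa [hzz.out] using one_lt_cosh.2 hε.ne')
  exact ⟨q, hq, (hdist_lt_iff hε.le).2 hy⟩

lemma IsBddSet.exists_forall_ge (hbd : IsBddSet W) (hcl : IsClosedSet W) (hne : W.Nonempty)
    {f : EuclideanSpace ℝ (Fin (d + 1)) → ℝ} (hf : Continuous f) :
    ∃ x ∈ W, ∀ c ∈ W, f c.1 ≤ f x.1 := by
  have hK := Metric.isCompact_of_isClosed_isBounded hcl.isClosed_image_val hbd.isBounded_image_val
  obtain ⟨_, ⟨x, hx, rfl⟩, hmax⟩ := hK.exists_isMaxOn (hne.image _) hf.continuousOn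
  exact ⟨x, hx, fun c hc => hmax ⟨c, hc, rfl⟩⟩

end Compactness

section Width

variable {S W : Set (Pt d)}

lemma distPS_le_width (hbd : IsBddSet W) (hS : (S ∩ W).Nonempty) {a : Pt d} (ha : a ∈ W) :
    distPS a S ≤ width S W := by
  obtain ⟨b, hbS, hbW⟩ := hS
  obtain ⟨R, hR⟩ := hbd
  refine le_csSup ⟨R, ?_⟩ ⟨a, ha, rfl⟩
  rintro _ ⟨e, he, rfl⟩
  exact (distPS_le_hdist hbS).trans (hR e he b hbW)

lemma exists_distPS_eq_width {v : EuclideanSpace ℝ (Fin (d + 1))} (hv : mink d v v = 1)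
    (hbd : IsBddSet W) (hcl : IsClosedSet W) (hne : W.Nonempty) :
    ∃ x ∈ W, distPS x (plane v) = width (plane v) W := by
  obtain ⟨x, hx, hmax⟩ := hbd.exists_forall_ge hcl hne
    (f := fun y => mink d v y ^ 2) (by fun_prop)
  refine ⟨x, hx, (IsGreatest.csSup_eq (s := (fun c => distPS c (plane v)) '' W)
    ⟨⟨x, hx, rfl⟩, ?_⟩).symm⟩
  rintro _ ⟨e, he, rfl⟩
  simp only [distPS_plane hv]
  exact (arcosh_le_arcosh (by positivity) (by positivity)).2
    (sqrt_le_sqrt (by linarith [hmax e he]))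

/-- The hyperplane through a point `b` of `W` farthest from `a`, orthogonal to the segment `ab`,
supports `W`; so the diameter is bounded by the widths. -/
lemma hdist_le_of_forall_width_le {δ : ℝ} (hbd : IsBddSet W) (hcl : IsClosedSet W)
    (hδ : 0 ≤ δ) (hwidth : ∀ H, Supports H W → width H W ≤ δ) {a c : Pt d} (ha : a ∈ W) (hc : c ∈ W) :
    hdist a c ≤ δ := by
  obtain ⟨b, hb, hfar⟩ := hbd.exists_forall_ge hcl ⟨a, ha⟩ (f := fun y => -mink d a.1 y)
    (by fun_prop)
  have hac : hdist a c ≤ hdist a b := hdist_le_hdist_iff.2 (hfar c hc)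
  set t := -mink d a.1 b.1
  rcases (one_le_neg_mink a b).eq_or_lt with ht | ht
  · rw [← eq_of_neg_mink_eq_one ht.symm, hdist_self] at hac
    linarith
  set s := √(t ^ 2 - 1)
  have hs : 0 < s := sqrt_pos.2 (by nlinarith)
  have hs2 : s ^ 2 = t ^ 2 - 1 := sq_sqrt (by nlinarith)
  set u := s⁻¹ • (a.1 - t • b.1)
  have hab : mink d b.1 a.1 = -t := by rw [mink_comm]; ring
  have hu : mink d u u = 1 := by
    simp only [u, mink_smul_left, mink_smul_right, mink_sub_left, mink_sub_right, a.2.1, b.2.1,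
      hab, mink_comm a.1 b.1]
    field_simp
    linarith
  have hub : b ∈ plane u := by
    rw [mem_plane]
    simp only [u, mink_smul_left, mink_sub_left, b.2.1]
    ring
  have hua : mink d u a.1 = s := by
    simp only [u, mink_smul_left, mink_sub_left, a.2.1, hab]
    field_simp
    linarith
  have hside : ∀ e ∈ W, 0 ≤ mink d u e.1 := by
    intro e he
    simp only [u, mink_smul_left, mink_sub_left]
    have := hfar e he
    have := one_le_neg_mink b e
    exact mul_nonneg (inv_nonneg.2 hs.le) (by nlinarith)
  calc hdist a c ≤ hdist a b := hac
    _ = distPS a (plane u) := by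
      rw [distPS_plane hu, hua, hs2, add_sub_cancel, sqrt_sq (by linarith)]
      rfl
    _ ≤ width (plane u) W := distPS_le_width hbd ⟨b, hub, hb⟩ ha
    _ ≤ δ := hwidth _ (supports_plane_of_forall_nonneg hu ⟨b, hub, hb⟩ hside)

end Width

/-- Proposition 3: every body of constant width is strictly
convex: each supporting hyperplane meets it in exactly one point. -/
theorem constWidth_strictly_convex {d : ℕ} (W : Set (Pt d)) (δ : ℝ)
    (hW : ConstWidth W δ) :
    ∀ H, Supports H W → ∃ p, H ∩ W = {p} := by
  obtain ⟨⟨-, hbd, hcl, -⟩, hwidth⟩ := hW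
  rintro H hH
  obtain ⟨v, hv, rfl⟩ := hH.1
  obtain ⟨p, hp⟩ := hH.2.1
  obtain ⟨x, hxW, hx⟩ := exists_distPS_eq_width hv hbd hcl ⟨p, hp.2⟩
  rw [hwidth _ hH] at hx
  have hdiam : ∀ a ∈ W, ∀ c ∈ W, hdist a c ≤ δ := fun a ha c hc =>
    hdist_le_of_forall_width_le hbd hcl (hx ▸ distPS_nonneg x _)
      (fun H hH => (hwidth H hH).le) ha hc
  have hfar : ∀ q ∈ plane v ∩ W, hdist x q = δ := fun q hq =>
    le_antisymm (hdiam x hxW q hq.2) (hx ▸ distPS_le_hdist hq.1)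
  refine ⟨p, Set.eq_singleton_iff_unique_mem.2 ⟨hp, fun q hq => ?_⟩⟩
  by_contra hne
  have hcloser := hdist_midpoint_lt hne ((hfar q hq).trans (hfar p hp).symm)
  have hmid := hx ▸ distPS_le_hdist (x := x) (Pt.midpoint_mem_plane hq.1 hp.1)
  linarith [hfar q hq]

end HypSpace
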